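/- Let 1<p<∞ and γ>n(p−1), and define ω(x):=1+|x|^γ on ℝ^n. Then ω∈A_p^∞(φ), but ω does not belong to the classical Muckenhoupt class A_p. -/

import Mathlib

open MeasureTheory Real Filter Set
open scoped ENNReal Classical

noncomputable section

/-- `ℝ^n`, with the Euclidean norm and Lebesgue measure. -/
abbrev Rn (n : ℕ) : Type := EuclideanSpace ℝ (Fin n)

variable {n m : ℕ}

/-- The cube `Q(c,r)` with center `c` and sidelength `r`. -/
def cube (c : Rn n) (r : ℝ) : Set (Rn n) := {y | ∀ i, |y i - c i| ≤ r / 2}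

/-- The average `f_Q = |Q|⁻¹ ∫_Q f`. -/
def avgOn (Q : Set (Rn n)) (f : Rn n → ℝ) : ℝ := (volume Q).toReal⁻¹ * ∫ y in Q, f y

/-- The normalizing factor `φ(Q)^θ * |Q|` for `Q = Q(c,r)`, where `φ(Q) := 1 + r`. -/
def phiFac (θ : ℝ) (c : Rn n) (r : ℝ) : ℝ := (1 + r) ^ θ * (volume (cube c r)).toReal

/-- The dyadic cube of generation `k` (sidelength `2^k`) indexed by `v`. -/
def dyadicCube (n : ℕ) (k : ℤ) (v : Fin n → ℤ) : Set (Rn n) :=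
  {y | ∀ i, (v i : ℝ) * 2 ^ k ≤ y i ∧ y i < ((v i : ℝ) + 1) * 2 ^ k}

/-- The dyadic maximal operator `M^△_{φ,η}`. -/
def dyadicM (η : ℝ) (f : Rn n → ℝ) (x : Rn n) : ℝ :=
  ⨆ k : ℤ, ⨆ v : Fin n → ℤ, ⨆ _ : x ∈ dyadicCube n k v,
    (((1 + (2:ℝ) ^ k) ^ η * (volume (dyadicCube n k v)).toReal)⁻¹ *
      ∫ y in dyadicCube n k v, |f y|)

/-- The dyadic sharp maximal operator `M^{♯,△}_{φ,η}`. -/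
def dyadicMSharp (η : ℝ) (f : Rn n → ℝ) (x : Rn n) : ℝ :=
  (⨆ k : ℤ, ⨆ v : Fin n → ℤ, ⨆ _ : x ∈ dyadicCube n k v ∧ (2:ℝ) ^ k < 1,
    avgOn (dyadicCube n k v) (fun y => |f y - avgOn (dyadicCube n k v) f|)) +
  ⨆ k : ℤ, ⨆ v : Fin n → ℤ, ⨆ _ : x ∈ dyadicCube n k v ∧ (1:ℝ) ≤ (2:ℝ) ^ k,
    (((1 + (2:ℝ) ^ k) ^ η * (volume (dyadicCube n k v)).toReal)⁻¹ *
      ∫ y in dyadicCube n k v, |f y|)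

/-- `M^△_{δ,φ,η} f := (M^△_{φ,η}(|f|^δ))^{1/δ}`. -/
def dyadicMPow (δ η : ℝ) (f : Rn n → ℝ) (x : Rn n) : ℝ :=
  (dyadicM η (fun y => |f y| ^ δ) x) ^ (1 / δ)

/-- `M^{♯,△}_{δ,φ,η} f := (M^{♯,△}_{φ,η}(|f|^δ))^{1/δ}`. -/
def dyadicMSharpPow (δ η : ℝ) (f : Rn n → ℝ) (x : Rn n) : ℝ :=
  (dyadicMSharp η (fun y => |f y| ^ δ) x) ^ (1 / δ)

/-- The multilinear maximal operator `𝓜_{φ,η}`. -/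
def multiM (η : ℝ) (f : Fin m → Rn n → ℝ) (x : Rn n) : ℝ :=
  ⨆ c : Rn n, ⨆ r : {r : ℝ // 0 < r}, ⨆ _ : x ∈ cube c (r : ℝ),
    ∏ j, (((1 + (r : ℝ)) ^ η * (volume (cube c (r : ℝ))).toReal)⁻¹ *
      ∫ y in cube c (r : ℝ), |f j y|)

/-- `𝓜_{δ,φ,η}(f⃗) := (𝓜_{φ,η}(|f₁|^δ,…,|f_m|^δ))^{1/δ}`. -/
def multiMPow (δ η : ℝ) (f : Fin m → Rn n → ℝ) (x : Rn n) : ℝ :=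
  (multiM η (fun j y => |f j y| ^ δ) x) ^ (1 / δ)

/-- `K_t(z, y⃗) := t^{-mn} K(z/t, y₁/t, …, y_m/t)`. -/
def Kt (K : Rn n → (Fin m → Rn n) → ℝ) (t : ℝ) (z : Rn n) (y : Fin m → Rn n) : ℝ :=
  (t ^ (m * n))⁻¹ * K (t⁻¹ • z) (fun j => t⁻¹ • y j)

/-- The multilinear Littlewood–Paley function `g^*_λ`. -/
def gStar (lam : ℝ) (K : Rn n → (Fin m → Rn n) → ℝ) (f : Fin m → Rn n → ℝ)
    (x : Rn n) : ℝ :=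
  (∫ t in Ioi (0:ℝ), ∫ z : Rn n,
      (t / (‖x - z‖ + t)) ^ ((n : ℝ) * lam) *
        (∫ y : Fin m → Rn n, Kt K t z y * ∏ j, f j (y j)) ^ 2 / t ^ ((n : ℝ) + 1)) ^ (1/2 : ℝ)

/-- The size condition (1.1): for every `N ≥ 0` there is `C > 0` with the stated bound. -/
def SizeCondition (lam : ℝ) (K : Rn n → (Fin m → Rn n) → ℝ) : Prop :=
  ∀ N : ℝ, 0 ≤ N → ∃ C > 0, ∀ (x : Rn n) (y : Fin m → Rn n),
    (∫ t in Ioi (0:ℝ), ∫ z : Rn n,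
        (t / (‖x - z‖ + t)) ^ ((n : ℝ) * lam) * (Kt K t z y) ^ 2 / t ^ ((n : ℝ) + 1)) ^ (1/2 : ℝ)
      ≤ C / ((∑ j, ‖x - y j‖) ^ (m * n) * (1 + ∑ j, ‖x - y j‖) ^ N)

/-- The conjugate exponent `q' = q/(q-1)`. -/
def conjExp (q : ℝ) : ℝ := q / (q - 1)

/-- The annulus `(Δ_{k+2})^m ∖ (Δ_{k+1})^m`, where `Δ_k := Q(x', 2^k √(mn) d)`. -/
def annulus (m : ℕ) (x' : Rn n) (d : ℝ) (k : ℕ) : Set (Fin m → Rn n) :=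
  (univ.pi fun _ : Fin m => cube x' (2 ^ (k + 2) * Real.sqrt (m * n) * d)) \
    (univ.pi fun _ : Fin m => cube x' (2 ^ (k + 1) * Real.sqrt (m * n) * d))

/-- The generalized smoothness condition (1.4), with exponent `q` and constants `C_k`. -/
def GenSmoothness (lam : ℝ) (K : Rn n → (Fin m → Rn n) → ℝ) (q : ℝ) (Ck : ℕ → ℝ) : Prop :=
  ∀ N : ℝ, 0 ≤ N → ∃ C > 0, ∀ (k : ℕ) (x x' : Rn n), x ≠ x' →
    (∫ t in Ioi (0:ℝ), ∫ z : Rn n,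
        (t / (‖z‖ + t)) ^ ((n : ℝ) * lam) *
          (∫ y in annulus m x' ‖x - x'‖ k, |Kt K t (x - z) y - Kt K t (x' - z) y| ^ q) ^ (2 / q)
            / t ^ ((n : ℝ) + 1)) ^ (1/2 : ℝ)
      ≤ C * Ck k * (2:ℝ) ^ (-((k : ℝ) * (m * n)) / conjExp q) *
          ‖x - x'‖ ^ (-((m * n : ℕ) : ℝ) / conjExp q) *
          (1 + (2:ℝ) ^ (k : ℝ) * ‖x - x'‖) ^ (-N)

/-- The weighted Lebesgue norm `‖f‖_{L^p(ω)}`. -/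
def wtLpNorm (p : ℝ) (ω : Rn n → ℝ) (f : Rn n → ℝ) : ℝ :=
  (∫ y, |f y| ^ p * ω y) ^ (1 / p)

/-- The weighted weak Lebesgue norm `‖f‖_{L^{p,∞}(ω)}`. -/
def wtWeakLpNorm (p : ℝ) (ω : Rn n → ℝ) (f : Rn n → ℝ) : ℝ :=
  ⨆ t : {t : ℝ // 0 < t}, (t : ℝ) * (∫ y in {x : Rn n | (t : ℝ) < |f x|}, ω y) ^ (1 / p)

/-- The weak boundedness condition: `g^*_λ` maps `L^{s₁} × ⋯ × L^{s_m}` to `L^{s,∞}` for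
some exponents `1 ≤ s_j ≤ q'` with `1/s = Σ 1/s_j`. -/
def WeakBoundedness (lam : ℝ) (K : Rn n → (Fin m → Rn n) → ℝ) (q' : ℝ) : Prop :=
  ∃ s : Fin m → ℝ, (∀ j, 1 ≤ s j ∧ s j ≤ q') ∧ ∃ C > 0,
    ∀ f : Fin m → Rn n → ℝ, (∀ j, Measurable (f j)) →
      wtWeakLpNorm (∑ j, (s j)⁻¹)⁻¹ (fun _ => 1) (gStar lam K f)
        ≤ C * ∏ j, wtLpNorm (s j) (fun _ => 1) (f j)

/-- `ω ∈ A_p^θ(φ)` (with the `A_1^θ(φ)` convention for `p = 1`). -/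
def memApTheta (p θ : ℝ) (ω : Rn n → ℝ) : Prop :=
  if p = 1 then
    ∃ C > 0, ∀ (c : Rn n) (r : ℝ), 0 < r →
      (phiFac θ c r)⁻¹ * (∫ y in cube c r, ω y)
        ≤ C * essInf ω (volume.restrict (cube c r))
  else
    ∃ C > 0, ∀ (c : Rn n) (r : ℝ), 0 < r →
      ((phiFac θ c r)⁻¹ * ∫ y in cube c r, ω y) ^ (1 / p) *
        ((phiFac θ c r)⁻¹ * ∫ y in cube c r, (ω y) ^ (-(1 / (p - 1)))) ^ (1 - 1 / p) ≤ C

/-- `ω ∈ A_p^∞(φ) := ⋃_{θ ≥ 0} A_p^θ(φ)`. -/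
def memApInfty (p : ℝ) (ω : Rn n → ℝ) : Prop := ∃ θ ≥ (0:ℝ), memApTheta p θ ω

/-- `ω ∈ A_∞^∞(φ) := ⋃_{p ≥ 1} A_p^∞(φ)`. -/
def memAInftyInfty (ω : Rn n → ℝ) : Prop := ∃ p ≥ (1:ℝ), memApInfty p ω

/-- `v_{ω⃗} := ∏_j ω_j^{p/p_j}` where `1/p = Σ_j 1/p_j`. -/
def vWeight (p : Fin m → ℝ) (ω : Fin m → Rn n → ℝ) : Rn n → ℝ :=
  fun y => ∏ j, (ω j y) ^ ((∑ i, (p i)⁻¹)⁻¹ / p j)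

/-- The `j`-th factor in the multilinear `A_{p⃗}^θ(φ)` condition (with the
convention `(inf_Q ω_j)⁻¹` for `p_j = 1`). -/
def apFactor (pj θ : ℝ) (ω : Rn n → ℝ) (c : Rn n) (r : ℝ) : ℝ :=
  if pj = 1 then (essInf ω (volume.restrict (cube c r)))⁻¹
  else ((phiFac θ c r)⁻¹ * ∫ y in cube c r, (ω y) ^ (1 - (1 - 1 / pj)⁻¹)) ^ (1 - 1 / pj)

/-- `ω⃗ ∈ A_{p⃗}^θ(φ)`. -/
def memMulApTheta (p : Fin m → ℝ) (θ : ℝ) (ω : Fin m → Rn n → ℝ) : Prop :=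
  ∃ C > 0, ∀ (c : Rn n) (r : ℝ), 0 < r →
    ((phiFac θ c r)⁻¹ * ∫ y in cube c r, vWeight p ω y) ^ (∑ i, (p i)⁻¹) *
      ∏ j, apFactor (p j) θ (ω j) c r ≤ C

/-- `ω⃗ ∈ A_{p⃗}^∞(φ) := ⋃_{θ ≥ 0} A_{p⃗}^θ(φ)`. -/
def memMulApInfty (p : Fin m → ℝ) (ω : Fin m → Rn n → ℝ) : Prop :=
  ∃ θ ≥ (0:ℝ), memMulApTheta p θ ω

/-- The `BMO_θ(φ)` "norm" of `b`. -/
def bmoNorm (θ : ℝ) (b : Rn n → ℝ) : ℝ :=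
  ⨆ c : Rn n, ⨆ r : {r : ℝ // 0 < r},
    (phiFac θ c (r : ℝ))⁻¹ * ∫ y in cube c (r : ℝ), |b y - avgOn (cube c (r : ℝ)) b|

/-- `b ∈ BMO_θ(φ)`. -/
def memBMO (θ : ℝ) (b : Rn n → ℝ) : Prop :=
  ∃ C : ℝ, ∀ (c : Rn n) (r : ℝ), 0 < r →
    (phiFac θ c r)⁻¹ * (∫ y in cube c r, |b y - avgOn (cube c r) b|) ≤ C

/-- The multilinear commutator `g^*_{λ,Σb⃗}`. -/
def gStarCommSum (lam : ℝ) (K : Rn n → (Fin m → Rn n) → ℝ) (b f : Fin m → Rn n → ℝ)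
    (x : Rn n) : ℝ :=
  ∑ j, gStar lam K (Function.update f j fun y => (b j x - b j y) * f j y) x

/-- The iterated commutator `g^*_{λ,Πb⃗_S}` associated with a subset `S` of indices. -/
def gStarIterOn (lam : ℝ) (K : Rn n → (Fin m → Rn n) → ℝ) (S : Finset (Fin m))
    (b f : Fin m → Rn n → ℝ) (x : Rn n) : ℝ :=
  gStar lam K (fun j y => (if j ∈ S then b j x - b j y else 1) * f j y) x

/-- The full multilinear iterated commutator `g^*_{λ,Πb⃗}`. -/
def gStarIter (lam : ℝ) (K : Rn n → (Fin m → Rn n) → ℝ) (b f : Fin m → Rn n → ℝ)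
    (x : Rn n) : ℝ :=
  gStarIterOn lam K Finset.univ b f x

/-- Bounded measurable function with compact support. -/
def NiceFun (f : Rn n → ℝ) : Prop :=
  Measurable f ∧ (∃ M, ∀ y, |f y| ≤ M) ∧ HasCompactSupport f

/-! By Peetre's inequality `1 + ‖y‖ ^ γ ≲ (1 + ‖y - x‖) ^ γ * (1 + ‖x‖ ^ γ)`, the weight varies by
at most a factor `≲ (1 + r) ^ γ` on a cube of sidelength `r`, so its `A_p` quotient there is
`≲ (1 + r) ^ (2γ)`, which the normalization `φ(Q) ^ (2γ)` absorbs.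

Conversely, on `Q(0, r)` with `r ≥ 1` the average of `ω` is `≳ r ^ γ` by homogeneity of `‖y‖ ^ γ`,
while the average of `ω ^ (-1/(p-1))` is `≳ r ^ (-n)` since the unit cube already carries a fixed
amount of it. The classical `A_p` quotient is therefore `≳ r ^ ((γ - n(p-1))/p)`, which is
unbounded. -/

lemma cube_eq_preimage_ofLp (c : Rn n) (r : ℝ) :
    cube c r = WithLp.ofLp ⁻¹' univ.pi fun i => Icc (c i - r / 2) (c i + r / 2) := by
  ext y
  simp only [cube, mem_ofPred_eq, mem_preimage, mem_univ_pi, mem_Icc, abs_sub_le_iff]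
  exact forall_congr' fun i => by constructor <;> intro h <;> constructor <;> linarith [h.1, h.2]

lemma measurableSet_cube (c : Rn n) (r : ℝ) : MeasurableSet (cube c r) := by
  rw [cube_eq_preimage_ofLp]
  exact (MeasurableSet.univ_pi fun _ => measurableSet_Icc).preimage (by fun_prop)

lemma isCompact_cube (c : Rn n) (r : ℝ) : IsCompact (cube c r) := by
  rw [cube_eq_preimage_ofLp]
  exact (PiLp.homeomorph 2 _).isCompact_preimage.2 (isCompact_univ_pi fun _ => isCompact_Icc)

lemma volume_cube (c : Rn n) (r : ℝ) : volume (cube c r) = ENNReal.ofReal r ^ n := by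
  rw [cube_eq_preimage_ofLp, (PiLp.volume_preserving_ofLp _).measure_preimage
    (MeasurableSet.univ_pi fun _ => measurableSet_Icc).nullMeasurableSet, volume_pi_pi]
  simp [Real.volume_Icc]

lemma measureReal_cube (c : Rn n) {r : ℝ} (hr : 0 ≤ r) : volume.real (cube c r) = r ^ n := by
  rw [measureReal_def, volume_cube, ENNReal.toReal_pow, ENNReal.toReal_ofReal hr]

lemma phiFac_eq (θ : ℝ) (c : Rn n) {r : ℝ} (hr : 0 ≤ r) :
    phiFac θ c r = (1 + r) ^ θ * r ^ n := by
  rw [phiFac, ← measureReal_def, measureReal_cube c hr]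

lemma phiFac_pos (θ : ℝ) (c : Rn n) {r : ℝ} (hr : 0 < r) : 0 < phiFac θ c r := by
  rw [phiFac_eq θ c hr.le]
  positivity

lemma measureReal_cube_div_phiFac (θ : ℝ) (c : Rn n) {r : ℝ} (hr : 0 < r) :
    volume.real (cube c r) / phiFac θ c r = ((1 + r) ^ θ)⁻¹ := by
  have : 0 < r ^ n := pow_pos hr n
  rw [phiFac_eq θ c hr.le, measureReal_cube c hr.le]
  field_simp

open scoped Pointwise in
lemma smul_cube_zero {r : ℝ} (hr : 0 < r) : r • cube (0 : Rn n) 1 = cube 0 r := by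
  ext y
  rw [mem_smul_set_iff_inv_smul_mem₀ hr.ne']
  simp only [cube, mem_ofPred_eq, PiLp.smul_apply, PiLp.zero_apply, sub_zero, smul_eq_mul,
    abs_mul, abs_inv, abs_of_pos hr]
  exact forall_congr' fun i => by rw [inv_mul_le_iff₀ hr]; ring_nf

lemma EuclideanSpace.norm_le_sqrt_card_mul {ι : Type*} [Fintype ι] {v : EuclideanSpace ℝ ι}
    {a : ℝ} (ha : 0 ≤ a) (hv : ∀ i, |v i| ≤ a) : ‖v‖ ≤ √(Fintype.card ι) * a := by
  rw [EuclideanSpace.norm_eq, ← Real.sqrt_sq ha, ← Real.sqrt_mul (Nat.cast_nonneg _)]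
  refine Real.sqrt_le_sqrt ?_
  calc ∑ i, ‖v i‖ ^ 2 ≤ ∑ _i : ι, a ^ 2 :=
        Finset.sum_le_sum fun i _ => pow_le_pow_left₀ (norm_nonneg _) (hv i) 2
    _ = Fintype.card ι * a ^ 2 := by simp

lemma norm_sub_le_of_mem_cube {c y z : Rn n} {r : ℝ} (hr : 0 ≤ r) (hy : y ∈ cube c r)
    (hz : z ∈ cube c r) : ‖y - z‖ ≤ √n * r := by
  simpa using EuclideanSpace.norm_le_sqrt_card_mul (v := y - z) hr fun i => by
    have := abs_sub_le (y i) (c i) (z i)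
    rw [abs_sub_comm (c i)] at this
    rw [PiLp.sub_apply]
    linarith [hy i, hz i]

lemma one_add_rpow_le_two_mul_one_add_rpow {t γ : ℝ} (ht : 0 ≤ t) (hγ : 0 ≤ γ) :
    1 + t ^ γ ≤ 2 * (1 + t) ^ γ := by
  have h1 : 1 ≤ (1 + t) ^ γ := Real.one_le_rpow (by linarith) hγ
  have h2 : t ^ γ ≤ (1 + t) ^ γ := Real.rpow_le_rpow ht (by linarith) hγ
  linarith

lemma one_add_rpow_le_two_rpow_mul {t γ : ℝ} (ht : 0 ≤ t) (hγ : 0 ≤ γ) :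
    (1 + t) ^ γ ≤ 2 ^ γ * (1 + t ^ γ) := by
  rcases le_total t 1 with h | h
  · calc (1 + t) ^ γ ≤ 2 ^ γ := Real.rpow_le_rpow (by linarith) (by linarith) hγ
      _ ≤ 2 ^ γ * (1 + t ^ γ) := le_mul_of_one_le_right (by positivity)
          (le_add_of_nonneg_right (by positivity))
  · calc (1 + t) ^ γ ≤ (2 * t) ^ γ := Real.rpow_le_rpow (by linarith) (by linarith) hγ
      _ = 2 ^ γ * t ^ γ := Real.mul_rpow zero_le_two ht
      _ ≤ 2 ^ γ * (1 + t ^ γ) := by gcongr; linarith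

lemma one_add_norm_rpow_le {E : Type*} [SeminormedAddCommGroup E] {γ : ℝ} (hγ : 0 ≤ γ)
    (x y : E) : 1 + ‖y‖ ^ γ ≤ 2 ^ (1 + γ) * (1 + ‖y - x‖) ^ γ * (1 + ‖x‖ ^ γ) := by
  have hxy : 1 + ‖y‖ ≤ (1 + ‖x‖) * (1 + ‖y - x‖) := by
    nlinarith [norm_le_norm_add_norm_sub' y x, norm_nonneg x, norm_nonneg (y - x)]
  calc 1 + ‖y‖ ^ γ ≤ 2 * (1 + ‖y‖) ^ γ := one_add_rpow_le_two_mul_one_add_rpow (norm_nonneg _) hγ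
    _ ≤ 2 * ((1 + ‖x‖) ^ γ * (1 + ‖y - x‖) ^ γ) := by
        rw [← Real.mul_rpow (by positivity) (by positivity)]
        gcongr
    _ ≤ 2 * (2 ^ γ * (1 + ‖x‖ ^ γ) * (1 + ‖y - x‖) ^ γ) := by
        gcongr
        exact one_add_rpow_le_two_rpow_mul (norm_nonneg _) hγ
    _ = 2 ^ (1 + γ) * (1 + ‖y - x‖) ^ γ * (1 + ‖x‖ ^ γ) := by
        rw [Real.rpow_add two_pos, Real.rpow_one]; ring

lemma continuous_one_add_norm_rpow_rpow {E : Type*} [SeminormedAddCommGroup E] {γ : ℝ}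
    (hγ : 0 ≤ γ) (s : ℝ) : Continuous fun y : E => (1 + ‖y‖ ^ γ) ^ s :=
  (continuous_const.add (continuous_norm.rpow_const fun _ => Or.inr hγ)).rpow_const
    fun y => Or.inl (by positivity : 1 + ‖y‖ ^ γ ≠ 0)

lemma apProduct_le_of_bounds {α : Type*} [MeasurableSpace α] {μ : Measure α} {s : Set α}
    (hs : MeasurableSet s) (hμs : μ s < ∞) {ω : α → ℝ} {p m M N : ℝ} (hp : 1 < p) (hm : 0 < m)
    (hmM : m ≤ M) (hN : 0 < N) (hlow : ∀ x ∈ s, m ≤ ω x) (hup : ∀ x ∈ s, ω x ≤ M) :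
    (N⁻¹ * ∫ x in s, ω x ∂μ) ^ (1 / p) *
        (N⁻¹ * ∫ x in s, ω x ^ (-(1 / (p - 1))) ∂μ) ^ (1 - 1 / p)
      ≤ μ.real s / N * (M / m) ^ (1 / p) := by
  set q := 1 / (p - 1)
  have hq : 0 ≤ q := one_div_nonneg.2 (by linarith)
  have hp' : 0 ≤ 1 - 1 / p := by rw [sub_nonneg, div_le_one (by linarith)]; exact hp.le
  have hpos : ∀ x ∈ s, 0 < ω x := fun x hx => hm.trans_le (hlow x hx)
  have hω : N⁻¹ * ∫ x in s, ω x ∂μ ≤ μ.real s / N * M := by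
    have := (Real.le_norm_self _).trans (norm_setIntegral_le_of_norm_le_const hμs fun x hx => by
      rw [Real.norm_of_nonneg (hpos x hx).le]; exact hup x hx)
    rw [div_mul_eq_mul_div, div_eq_inv_mul]
    gcongr
    linarith
  have hσ : N⁻¹ * ∫ x in s, ω x ^ (-q) ∂μ ≤ μ.real s / N * m ^ (-q) := by
    have := (Real.le_norm_self _).trans (norm_setIntegral_le_of_norm_le_const hμs fun x hx => by
      rw [Real.norm_of_nonneg (Real.rpow_nonneg (hpos x hx).le _)]
      exact Real.rpow_le_rpow_of_nonpos hm (hlow x hx) (neg_nonpos.2 hq))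
    rw [div_mul_eq_mul_div, div_eq_inv_mul]
    gcongr
    linarith
  have hω0 : 0 ≤ N⁻¹ * ∫ x in s, ω x ∂μ :=
    mul_nonneg (inv_nonneg.2 hN.le) (setIntegral_nonneg hs fun x hx => (hpos x hx).le)
  have hσ0 : 0 ≤ N⁻¹ * ∫ x in s, ω x ^ (-q) ∂μ :=
    mul_nonneg (inv_nonneg.2 hN.le)
      (setIntegral_nonneg hs fun x hx => Real.rpow_nonneg (hpos x hx).le _)
  have hV : 0 ≤ μ.real s / N := div_nonneg measureReal_nonneg hN.le
  have hM : 0 ≤ M := hm.le.trans hmM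
  have hexp : -q * (1 - 1 / p) = -(1 / p) := by
    have hp0 : p ≠ 0 := by linarith
    have hp1 : p - 1 ≠ 0 := by linarith
    simp only [q]
    field_simp
  have hV1 : (μ.real s / N) ^ (1 / p) * (μ.real s / N) ^ (1 - 1 / p) = μ.real s / N := by
    rw [← Real.rpow_add' hV (by norm_num)]; norm_num
  calc _ ≤ (μ.real s / N * M) ^ (1 / p) * (μ.real s / N * m ^ (-q)) ^ (1 - 1 / p) := by
        gcongr
    _ = (μ.real s / N) ^ (1 / p) * (μ.real s / N) ^ (1 - 1 / p) * (M ^ (1 / p) / m ^ (1 / p)) := by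
        rw [Real.mul_rpow hV hM, Real.mul_rpow hV (by positivity), ← Real.rpow_mul hm.le, hexp,
          Real.rpow_neg hm.le]
        ring
    _ = μ.real s / N * (M / m) ^ (1 / p) := by rw [hV1, Real.div_rpow hM hm.le]

lemma memApTheta_one_add_norm_rpow {p γ : ℝ} (hp : 1 < p) (hγ : 0 ≤ γ) :
    memApTheta p (2 * γ) (fun x : Rn n => 1 + ‖x‖ ^ γ) := by
  rw [memApTheta, if_neg hp.ne']
  set ω : Rn n → ℝ := fun x => 1 + ‖x‖ ^ γ
  have hω : ∀ x, 0 < ω x := fun x => by positivity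
  set K := 2 ^ (1 + γ) * (1 + √n) ^ γ
  refine ⟨K ^ 2, by positivity, fun c r hr => ?_⟩
  set L := 2 ^ (1 + γ) * (1 + √n * r) ^ γ
  have hL : 1 ≤ L := one_le_mul_of_one_le_of_one_le
    (Real.one_le_rpow one_le_two (by linarith)) (Real.one_le_rpow (by simp; positivity) hγ)
  have hLK : L ≤ K * (1 + r) ^ γ := by
    rw [mul_assoc, ← Real.mul_rpow (by positivity) (by positivity)]
    show 2 ^ (1 + γ) * (1 + √n * r) ^ γ ≤ 2 ^ (1 + γ) * ((1 + √n) * (1 + r)) ^ γ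
    gcongr
    nlinarith [Real.sqrt_nonneg n]
  have harnack : ∀ x ∈ cube c r, ∀ y ∈ cube c r, ω y ≤ L * ω x := fun x hx y hy =>
    calc ω y ≤ 2 ^ (1 + γ) * (1 + ‖y - x‖) ^ γ * ω x := one_add_norm_rpow_le hγ x y
      _ ≤ 2 ^ (1 + γ) * (1 + √n * r) ^ γ * ω x := by
        gcongr
        exact norm_sub_le_of_mem_cube hr.le hy hx
  have hc : c ∈ cube c r := fun i => by simp only [sub_self, abs_zero]; positivity
  have hL0 : 0 < L := zero_lt_one.trans_le hL
  calc _ ≤ volume.real (cube c r) / phiFac (2 * γ) c r * (L * ω c / (ω c / L)) ^ (1 / p) :=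
        apProduct_le_of_bounds (measurableSet_cube c r) (isCompact_cube c r).measure_lt_top hp
          (div_pos (hω c) hL0)
          ((div_le_self (hω c).le hL).trans (le_mul_of_one_le_left (hω c).le hL))
          (phiFac_pos _ c hr)
          (fun y hy => div_le_of_le_mul₀ hL0.le (hω y).le (mul_comm L _ ▸ harnack y hy c hc))
          (fun y hy => harnack c hc y hy)
    _ = (((1 + r) ^ γ) ^ 2)⁻¹ * (L ^ 2) ^ (1 / p) := by
        rw [measureReal_cube_div_phiFac _ c hr, mul_comm 2 γ, Real.rpow_mul (by positivity),
          Real.rpow_two]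
        congr 2
        field_simp [(hω c).ne']
    _ ≤ (((1 + r) ^ γ) ^ 2)⁻¹ * L ^ 2 := by
        gcongr
        exact Real.rpow_le_self_of_one_le (one_le_pow₀ hL) ((div_le_one (by linarith)).2 hp.le)
    _ ≤ K ^ 2 := by
        rw [inv_mul_le_iff₀ (by positivity), ← mul_pow, mul_comm]
        gcongr

lemma setIntegral_cube_zero_norm_rpow (γ : ℝ) {r : ℝ} (hr : 0 < r) :
    ∫ y in cube (0 : Rn n) r, ‖y‖ ^ γ = r ^ n * r ^ γ * ∫ y in cube (0 : Rn n) 1, ‖y‖ ^ γ := by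
  have h := Measure.setIntegral_comp_smul_of_pos volume (fun y : Rn n => ‖y‖ ^ γ) (cube 0 1) hr
  simp only [smul_cube_zero hr, finrank_euclideanSpace_fin, norm_smul, Real.norm_of_nonneg hr.le,
    Real.mul_rpow hr.le (norm_nonneg _), integral_const_mul, smul_eq_mul] at h
  rw [mul_assoc, h]
  field_simp

lemma setIntegral_cube_pos (hn : 1 ≤ n) (c : Rn n) {r : ℝ} (hr : 0 < r) {f : Rn n → ℝ}
    (hfi : IntegrableOn f (cube c r)) (hf0 : ∀ y, 0 ≤ f y) (hfpos : ∀ y, y ≠ 0 → 0 < f y) :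
    0 < ∫ y in cube c r, f y := by
  have : Nonempty (Fin n) := ⟨⟨0, hn⟩⟩
  rw [setIntegral_pos_iff_support_of_nonneg_ae (ae_of_all _ hf0) hfi]
  calc 0 < volume (cube c r) := by
        rw [volume_cube]; exact ENNReal.pow_pos (ENNReal.ofReal_pos.2 hr) n
    _ = volume (cube c r \ {0}) := (measure_sdiff_null (measure_singleton 0)).symm
    _ ≤ volume (Function.support f ∩ cube c r) :=
        measure_mono fun y hy => ⟨(hfpos y hy.2).ne', hy.1⟩

lemma rpow_le_apProduct_cube_zero {p γ : ℝ} (hp : 1 < p) (hγ : 0 ≤ γ) {r : ℝ} (hr : 1 ≤ r) :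
    (∫ y in cube (0 : Rn n) 1, ‖y‖ ^ γ) ^ (1 / p) *
        (∫ y in cube (0 : Rn n) 1, (1 + ‖y‖ ^ γ) ^ (-(1 / (p - 1)))) ^ (1 - 1 / p) *
        r ^ ((γ - n * (p - 1)) / p)
      ≤ ((phiFac 0 (0 : Rn n) r)⁻¹ * ∫ y in cube (0 : Rn n) r, (1 + ‖y‖ ^ γ)) ^ (1 / p) *
        ((phiFac 0 (0 : Rn n) r)⁻¹ * ∫ y in cube (0 : Rn n) r, (1 + ‖y‖ ^ γ) ^ (-(1 / (p - 1)))) ^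
          (1 - 1 / p) := by
  set a := ∫ y in cube (0 : Rn n) 1, ‖y‖ ^ γ
  set b := ∫ y in cube (0 : Rn n) 1, (1 + ‖y‖ ^ γ) ^ (-(1 / (p - 1)))
  have hr0 : 0 < r := by linarith
  have hcont : Continuous fun y : Rn n => ‖y‖ ^ γ := continuous_norm.rpow_const fun _ => Or.inr hγ
  have hωcont : Continuous fun y : Rn n => 1 + ‖y‖ ^ γ := continuous_const.add hcont
  have ha : 0 ≤ a := setIntegral_nonneg (measurableSet_cube 0 1) fun y _ => by positivity
  have hb : 0 ≤ b := setIntegral_nonneg (measurableSet_cube 0 1) fun y _ => by positivity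
  have hA : a * r ^ γ ≤ (phiFac 0 (0 : Rn n) r)⁻¹ * ∫ y in cube (0 : Rn n) r, (1 + ‖y‖ ^ γ) := by
    rw [phiFac_eq 0 0 hr0.le, Real.rpow_zero, one_mul, le_inv_mul_iff₀ (by positivity)]
    calc r ^ n * (a * r ^ γ) = ∫ y in cube (0 : Rn n) r, ‖y‖ ^ γ := by
          rw [setIntegral_cube_zero_norm_rpow γ hr0]; ring
      _ ≤ _ := setIntegral_mono_on (hcont.continuousOn.integrableOn_compact (isCompact_cube 0 r))
          (hωcont.continuousOn.integrableOn_compact (isCompact_cube 0 r))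
          (measurableSet_cube 0 r) fun y _ => le_add_of_nonneg_left zero_le_one
  have hB : r ^ (-(n : ℝ)) * b ≤
      (phiFac 0 (0 : Rn n) r)⁻¹ * ∫ y in cube (0 : Rn n) r, (1 + ‖y‖ ^ γ) ^ (-(1 / (p - 1))) := by
    rw [phiFac_eq 0 0 hr0.le, Real.rpow_zero, one_mul, Real.rpow_neg hr0.le, Real.rpow_natCast]
    gcongr
    refine setIntegral_mono_set ((continuous_one_add_norm_rpow_rpow hγ _).continuousOn.integrableOn_compact (isCompact_cube 0 r))
      (ae_of_all _ fun y => by positivity) (LE.le.eventuallyLE fun y hy i => ?_)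
    exact (hy i).trans (by linarith)
  calc a ^ (1 / p) * b ^ (1 - 1 / p) * r ^ ((γ - n * (p - 1)) / p)
      = (a * r ^ γ) ^ (1 / p) * (r ^ (-(n : ℝ)) * b) ^ (1 - 1 / p) := by
        rw [Real.mul_rpow ha (by positivity), Real.mul_rpow (by positivity) hb,
          ← Real.rpow_mul hr0.le, ← Real.rpow_mul hr0.le]
        have hexp : (γ - n * (p - 1)) / p = γ * (1 / p) + -(n : ℝ) * (1 - 1 / p) := by
          field_simp
          ring
        rw [hexp, Real.rpow_add hr0]
        ring
    _ ≤ _ := by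
        have hp' : 0 ≤ 1 - 1 / p := by rw [sub_nonneg, div_le_one (by linarith)]; exact hp.le
        have hA0 : 0 ≤ a * r ^ γ := mul_nonneg ha (by positivity)
        exact mul_le_mul (Real.rpow_le_rpow hA0 hA (by positivity))
          (Real.rpow_le_rpow (mul_nonneg (by positivity) hb) hB hp') (by positivity)
          (Real.rpow_nonneg (hA0.trans hA) _)

lemma not_memApTheta_zero_one_add_norm_rpow (hn : 1 ≤ n) {p γ : ℝ} (hp : 1 < p)
    (hγ : n * (p - 1) < γ) : ¬ memApTheta p 0 (fun x : Rn n => 1 + ‖x‖ ^ γ) := by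
  have hγ0 : 0 ≤ γ := le_trans (mul_nonneg (Nat.cast_nonneg n) (by linarith)) hγ.le
  rw [memApTheta, if_neg hp.ne']
  rintro ⟨C, -, hC⟩
  have hcont : Continuous fun y : Rn n => ‖y‖ ^ γ := continuous_norm.rpow_const fun _ => Or.inr hγ0
  have ha : 0 < ∫ y in cube (0 : Rn n) 1, ‖y‖ ^ γ :=
    setIntegral_cube_pos hn 0 one_pos (hcont.continuousOn.integrableOn_compact (isCompact_cube 0 1))
      (fun y => by positivity) fun y hy => Real.rpow_pos_of_pos (norm_pos_iff.2 hy) γ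
  have hb : 0 < ∫ y in cube (0 : Rn n) 1, (1 + ‖y‖ ^ γ) ^ (-(1 / (p - 1))) :=
    setIntegral_cube_pos hn 0 one_pos
      ((continuous_one_add_norm_rpow_rpow hγ0 _).continuousOn.integrableOn_compact
        (isCompact_cube 0 1))
      (fun y => by positivity) fun y _ => by positivity
  have he : 0 < (γ - n * (p - 1)) / p := div_pos (by linarith) (by linarith)
  obtain ⟨r, hrC, hr⟩ := ((((tendsto_rpow_atTop he).const_mul_atTop
    (mul_pos (Real.rpow_pos_of_pos ha (1 / p)) (Real.rpow_pos_of_pos hb (1 - 1 / p)))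
    ).eventually_gt_atTop C).and (eventually_ge_atTop 1)).exists
  exact (hrC.trans_le (rpow_le_apProduct_cube_zero hp hγ0 hr)).not_ge (hC 0 r (by linarith))

/-- For `γ > n(p-1)`, the weight `ω(x) = 1 + |x|^γ` belongs to `A_p^∞(φ)` but not to the
classical Muckenhoupt class `A_p` (i.e. `A_p^0(φ)`). -/
theorem statement8 (n : ℕ) (hn : 1 ≤ n) (p γ : ℝ) (hp : 1 < p)
    (hγ : (n : ℝ) * (p - 1) < γ) :
    memApInfty p (fun x : Rn n => 1 + ‖x‖ ^ γ) ∧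
      ¬ memApTheta p 0 (fun x : Rn n => 1 + ‖x‖ ^ γ) := by
  have hγ0 : 0 ≤ γ := le_trans (mul_nonneg (Nat.cast_nonneg n) (by linarith)) hγ.le
  exact ⟨⟨2 * γ, by positivity, memApTheta_one_add_norm_rpow hp hγ0⟩,
    not_memApTheta_zero_one_add_norm_rpow hn hp hγ⟩

end
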